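/- Every pure Nash equilibrium (x1*, x2*) of the two-player miner's dilemma game with betrayal assumption satisfies exactly one of the following: (a) x1* = 0; (b) x2* = 0; (c) (x1*, x2*) ∈ (0, m1)×(0, m2) and ∂r1/∂x1(x1*, x2*) = 0 and ∂r2/∂x2(x1*, x2*) = 0. -/

import Mathlib

/-!
At an equilibrium each pool's strategy maximizes its own reward over an interval, so a one-sided
derivative condition holds at an endpoint maximizer. Two boundary cases are impossible: at
`(0, 0)` pool 1 gains by infiltrating (`∂r1/∂x1 = (1-p)/m² > 0`), and a pool that puts all its
power into infiltration while the other infiltrates a positive amount gains by pulling some back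
(`∂r1/∂x1 < 0` at `x1 = m1`). Every remaining equilibrium with both coordinates nonzero is interior,
where Fermat's theorem gives the vanishing partial derivatives.
-/

/-- Average reward of pool 1 in the two-player miner's dilemma with betrayal,
where the total mining power is `m1 + m2 + t`. -/
noncomputable def r1 (m1 m2 t p x1 x2 : ℝ) : ℝ :=
  (m1*m2 + m1*x1 + p*m2*x2 - (1-p)*x1^2 - (1-p)*x1*x2) /
    (((m1+m2+t) - (1-p)*(x1+x2)) * (m1*m2 + m1*x1 + m2*x2))

/-- Average reward of pool 2. -/
noncomputable def r2 (m1 m2 t p x1 x2 : ℝ) : ℝ :=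
  (m1*m2 + m2*x2 + p*m1*x1 - (1-p)*x2^2 - (1-p)*x1*x2) /
    (((m1+m2+t) - (1-p)*(x1+x2)) * (m1*m2 + m1*x1 + m2*x2))

/-- `(x1, x2)` is a pure Nash equilibrium of the two-player miner's dilemma game. -/
noncomputable def IsNash (m1 m2 t p x1 x2 : ℝ) : Prop :=
  x1 ∈ Set.Icc 0 m1 ∧ x2 ∈ Set.Icc 0 m2 ∧
  (∀ x ∈ Set.Icc (0:ℝ) m1, r1 m1 m2 t p x x2 ≤ r1 m1 m2 t p x1 x2) ∧
  (∀ x ∈ Set.Icc (0:ℝ) m2, r2 m1 m2 t p x1 x ≤ r2 m1 m2 t p x1 x2)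

open Set

theorem IsMaxOn.hasDerivAt_nonpos_of_left {f : ℝ → ℝ} {a b f' : ℝ}
    (h : IsMaxOn f (Icc a b) a) (hab : a < b) (hf : HasDerivAt f f' a) : f' ≤ 0 := by
  have hcone : b - a ∈ posTangentConeAt (Icc a b) a :=
    sub_mem_posTangentConeAt_of_segment_subset (segment_eq_Icc hab.le ▸ Subset.rfl)
  have := h.localize.hasFDerivWithinAt_nonpos hf.hasFDerivAt.hasFDerivWithinAt hcone
  simp only [ContinuousLinearMap.toSpanSingleton_apply, smul_eq_mul] at this
  exact nonpos_of_mul_nonpos_right this (sub_pos.2 hab)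

theorem IsMaxOn.hasDerivAt_nonneg_of_right {f : ℝ → ℝ} {a b f' : ℝ}
    (h : IsMaxOn f (Icc a b) b) (hab : a < b) (hf : HasDerivAt f f' b) : 0 ≤ f' := by
  have hcone : a - b ∈ posTangentConeAt (Icc a b) b :=
    sub_mem_posTangentConeAt_of_segment_subset (by rw [segment_symm, segment_eq_Icc hab.le])
  have := h.localize.hasFDerivWithinAt_nonpos hf.hasFDerivAt.hasFDerivWithinAt hcone
  simp only [ContinuousLinearMap.toSpanSingleton_apply, smul_eq_mul] at this
  exact nonneg_of_mul_nonpos_right this (sub_neg.2 hab)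

lemma r2_eq_r1_swap (m1 m2 t p x1 x2 : ℝ) : r2 m1 m2 t p x1 x2 = r1 m2 m1 t p x2 x1 := by
  unfold r1 r2
  ring_nf

def fullInfiltrationDeficit (m1 m2 t p a : ℝ) : ℝ :=
  t*(m2*a^2 + 2*m1*m2*a + 2*m1^2*m2 + m1^3) + m2*(1-p)*a^2*(m2-a)
    + m1*m2*(p*(a^2 + m1^2 + m1*m2) + (1-p)*(a+m1)*(m2-a))

section FirstPartial

variable {m1 m2 t p : ℝ}

lemma hasDerivAt_r1_fst {x a : ℝ} (hE : (m1+m2+t) - (1-p)*(x+a) ≠ 0)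
    (hF : m1*m2 + m1*x + m2*a ≠ 0) :
    HasDerivAt (fun x => r1 m1 m2 t p x a)
      (((m1 - 2*(1-p)*x - (1-p)*a) * (((m1+m2+t) - (1-p)*(x+a)) * (m1*m2 + m1*x + m2*a))
        - (m1*m2 + m1*x + p*m2*a - (1-p)*x^2 - (1-p)*x*a)
          * (-(1-p) * (m1*m2 + m1*x + m2*a) + ((m1+m2+t) - (1-p)*(x+a)) * m1))
        / (((m1+m2+t) - (1-p)*(x+a)) * (m1*m2 + m1*x + m2*a))^2) x := by
  have hN : HasDerivAt (fun x => m1*m2 + m1*x + p*m2*a - (1-p)*x^2 - (1-p)*x*a)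
      (m1 - 2*(1-p)*x - (1-p)*a) x := by
    refine (((((hasDerivAt_id x).const_mul m1).const_add (m1*m2)).add_const (p*m2*a)).sub
      ((hasDerivAt_pow 2 x).const_mul (1-p)) |>.sub
        (((hasDerivAt_id x).const_mul (1-p)).mul_const a)).congr_deriv ?_
    push_cast
    ring
  have hE' : HasDerivAt (fun x => (m1+m2+t) - (1-p)*(x+a)) (-(1-p)) x :=
    (((hasDerivAt_id x).add_const a).const_mul (1-p)).const_sub (m1+m2+t) |>.congr_deriv (by ring)
  have hF' : HasDerivAt (fun x => m1*m2 + m1*x + m2*a) m1 x :=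
    (((hasDerivAt_id x).const_mul m1).const_add (m1*m2)).add_const (m2*a) |>.congr_deriv (by ring)
  exact hN.div (hE'.mul hF') (mul_ne_zero hE hF)

lemma hasDerivAt_r1_fst_zero_zero (hm : m1 + m2 + t ≠ 0) (hm12 : m1 * m2 ≠ 0) :
    HasDerivAt (fun x => r1 m1 m2 t p x 0) ((1-p) / (m1+m2+t)^2) 0 := by
  have hE : (m1+m2+t) - (1-p)*(0+0) ≠ 0 := by simpa using hm
  have hF : m1*m2 + m1*0 + m2*0 ≠ 0 := by simpa using hm12
  refine (hasDerivAt_r1_fst hE hF).congr_deriv ?_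
  rw [div_eq_div_iff (pow_ne_zero 2 (mul_ne_zero hE hF)) (pow_ne_zero 2 hm)]
  ring

lemma hasDerivAt_r1_fst_right {a : ℝ} (hE : (m1+m2+t) - (1-p)*(m1+a) ≠ 0)
    (hF : m1*m2 + m1*m1 + m2*a ≠ 0) :
    HasDerivAt (fun x => r1 m1 m2 t p x a)
      (-((1-p) * fullInfiltrationDeficit m1 m2 t p a)
        / (((m1+m2+t) - (1-p)*(m1+a)) * (m1*m2 + m1*m1 + m2*a))^2) m1 :=
  (hasDerivAt_r1_fst hE hF).congr_deriv (by unfold fullInfiltrationDeficit; ring)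

lemma fullInfiltrationDeficit_pos {a : ℝ} (hm1 : 0 < m1) (hm2 : 0 < m2) (ht : 0 ≤ t)
    (hp0 : 0 ≤ p) (hp1 : p < 1) (ha : 0 ≤ a) (ham : a ≤ m2)
    (hE : 0 < (m1+m2+t) - (1-p)*(m1+a)) :
    0 < fullInfiltrationDeficit m1 m2 t p a := by
  unfold fullInfiltrationDeficit
  have hq : 0 < 1 - p := sub_pos.2 hp1
  have hb : 0 ≤ m2 - a := sub_nonneg.2 ham
  have h1 : 0 ≤ t*(m2*a^2 + 2*m1*m2*a + 2*m1^2*m2 + m1^3) := by positivity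
  have h2 : 0 ≤ m2*(1-p)*a^2*(m2-a) := by positivity
  have h3 : 0 ≤ m1*m2*(p*(a^2 + m1^2 + m1*m2)) := by positivity
  have h4 : 0 ≤ m1*m2*((1-p)*(a+m1)*(m2-a)) := by positivity
  have hstrict : 0 < t ∨ 0 < p ∨ a < m2 := by
    by_contra! h
    nlinarith
  rcases hstrict with h | h | h
  · have : 0 < t*(m2*a^2 + 2*m1*m2*a + 2*m1^2*m2 + m1^3) := by positivity
    linarith
  · have : 0 < m1*m2*(p*(a^2 + m1^2 + m1*m2)) := by positivity
    linarith
  · have : 0 < m1*m2*((1-p)*(a+m1)*(m2-a)) :=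
      mul_pos (by positivity) (mul_pos (by positivity) (sub_pos.2 h))
    linarith

lemma r1_zero_pos {a : ℝ} (hm1 : 0 < m1) (hm2 : 0 < m2) (ht : 0 ≤ t) (hp0 : 0 ≤ p)
    (ha : 0 ≤ a) (ham : a ≤ m2) : 0 < r1 m1 m2 t p 0 a := by
  unfold r1
  apply div_pos
  · nlinarith [mul_pos hm1 hm2, mul_nonneg (mul_nonneg hp0 hm2.le) ha]
  · apply mul_pos
    · nlinarith
    · nlinarith [mul_pos hm1 hm2, mul_nonneg hm2.le ha]

lemma not_isMaxOn_r1_zero_zero (hm1 : 0 < m1) (hm2 : 0 < m2) (ht : 0 ≤ t) (hp1 : p < 1) :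
    ¬ IsMaxOn (fun x => r1 m1 m2 t p x 0) (Icc 0 m1) 0 := by
  intro hmax
  have hm : 0 < m1 + m2 + t := by linarith
  have hder := hmax.hasDerivAt_nonpos_of_left hm1
    (hasDerivAt_r1_fst_zero_zero hm.ne' (mul_pos hm1 hm2).ne')
  have : 0 < (1 - p) / (m1 + m2 + t)^2 := div_pos (sub_pos.2 hp1) (by positivity)
  linarith

lemma not_isMaxOn_r1_right {a : ℝ} (hm1 : 0 < m1) (hm2 : 0 < m2) (ht : 0 ≤ t) (hp0 : 0 ≤ p)
    (hp1 : p < 1) (ha : 0 < a) (ham : a ≤ m2) :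
    ¬ IsMaxOn (fun x => r1 m1 m2 t p x a) (Icc 0 m1) m1 := by
  intro hmax
  have hE : 0 < (m1+m2+t) - (1-p)*(m1+a) := by
    refine (show 0 ≤ (m1+m2+t) - (1-p)*(m1+a) by nlinarith).lt_of_ne' fun hE0 => ?_
    -- then `r1 m1 a` is the junk value `x / 0 = 0`, below `r1 0 a > 0`
    have hzero : r1 m1 m2 t p m1 a = 0 := by simp [r1, hE0]
    have hle : r1 m1 m2 t p 0 a ≤ r1 m1 m2 t p m1 a := hmax (left_mem_Icc.2 hm1.le)
    linarith [r1_zero_pos hm1 hm2 ht hp0 ha.le ham]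
  have hF : 0 < m1*m2 + m1*m1 + m2*a := by positivity
  have hder := hmax.hasDerivAt_nonneg_of_right hm1 (hasDerivAt_r1_fst_right hE.ne' hF.ne')
  have hT := fullInfiltrationDeficit_pos hm1 hm2 ht hp0 hp1 ha.le ham hE
  have hq : 0 < 1 - p := sub_pos.2 hp1
  have : 0 < (1 - p) * fullInfiltrationDeficit m1 m2 t p a
      / (((m1+m2+t) - (1-p)*(m1+a)) * (m1*m2 + m1*m1 + m2*a))^2 := by positivity
  rw [neg_div] at hder
  linarith

end FirstPartial

/-- Every pure Nash equilibrium satisfies exactly one of: (a) `x1* = 0`;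
(b) `x2* = 0`; (c) interior with vanishing partial derivatives. -/
theorem stmt8 (m1 m2 t p : ℝ) (hm1 : 0 < m1) (hm2 : 0 < m2) (ht : 0 ≤ t)
    (hp0 : 0 ≤ p) (hp1 : p < 1) (x1s x2s : ℝ)
    (hne : IsNash m1 m2 t p x1s x2s) :
    (x1s = 0 ∧ ¬(x2s = 0)) ∨
    (¬(x1s = 0) ∧ x2s = 0) ∨
    (¬(x1s = 0) ∧ ¬(x2s = 0) ∧
      x1s ∈ Set.Ioo 0 m1 ∧ x2s ∈ Set.Ioo 0 m2 ∧
      deriv (fun x => r1 m1 m2 t p x x2s) x1s = 0 ∧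
      deriv (fun x => r2 m1 m2 t p x1s x) x2s = 0) := by
  obtain ⟨hx1, hx2, hbr1, hbr2⟩ := hne
  replace hbr1 : IsMaxOn (fun x => r1 m1 m2 t p x x2s) (Icc 0 m1) x1s := isMaxOn_iff.2 hbr1
  replace hbr2 : IsMaxOn (fun x => r2 m1 m2 t p x1s x) (Icc 0 m2) x2s := isMaxOn_iff.2 hbr2
  have hbr2' : IsMaxOn (fun x => r1 m2 m1 t p x x1s) (Icc 0 m2) x2s := by
    simpa only [r2_eq_r1_swap] using hbr2
  by_cases h1 : x1s = 0 <;> by_cases h2 : x2s = 0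
  · subst h1 h2
    exact (not_isMaxOn_r1_zero_zero hm1 hm2 ht hp1 hbr1).elim
  · exact Or.inl ⟨h1, h2⟩
  · exact Or.inr (Or.inl ⟨h1, h2⟩)
  have hx1p : 0 < x1s := hx1.1.lt_of_ne' h1
  have hx2p : 0 < x2s := hx2.1.lt_of_ne' h2
  have hx1m : x1s < m1 := hx1.2.lt_of_ne fun h =>
    not_isMaxOn_r1_right hm1 hm2 ht hp0 hp1 hx2p hx2.2 (h ▸ hbr1)
  have hx2m : x2s < m2 := hx2.2.lt_of_ne fun h =>
    not_isMaxOn_r1_right hm2 hm1 ht hp0 hp1 hx1p hx1.2 (h ▸ hbr2')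
  exact Or.inr (Or.inr ⟨h1, h2, ⟨hx1p, hx1m⟩, ⟨hx2p, hx2m⟩,
    (hbr1.isLocalMax (Icc_mem_nhds hx1p hx1m)).deriv_eq_zero,
    (hbr2.isLocalMax (Icc_mem_nhds hx2p hx2m)).deriv_eq_zero⟩)
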